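/- arXiv:1603.06357 — 2 statements merged into one kernel-verified Lean document; each statement's English description precedes it below -/
import Mathlib

section
/- For every integer m ≥ 0, one has 4 · a₆(3m+1) = (−1)^{m+1} · r(3m+1), i.e. 4 · ∑_{d | 3m+1, d odd, d > 0} ξ(2(3m+1)/d − d) = (−1)^{m+1} · r(3m+1). -/
/-- `ξ m` for odd `m`, determined by the residue of `m` modulo 12. -/
def xi (m : ℤ) : ℤ :=
  if m % 12 = 1 ∨ m % 12 = 5 then -1
  else if m % 12 = 3 then -2
  else if m % 12 = 7 ∨ m % 12 = 11 then 1
  else if m % 12 = 9 then 2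
  else 0

/-- `a₆ n = ∑ ξ(2n/d − d)` over odd positive divisors `d` of `n`. -/
def a6 (n : ℕ) : ℤ :=
  ∑ d ∈ n.divisors.filter (fun d => Odd d), xi (2 * ((n : ℤ) / (d : ℤ)) - (d : ℤ))

/-- `r n` is the number of representations of `n` as a sum of two squares of integers. -/
noncomputable def r (n : ℕ) : ℕ := Set.ncard {p : ℤ × ℤ | p.1 ^ 2 + p.2 ^ 2 = (n : ℤ)}

/-!
For `n ≡ 1 (mod 3)` and an odd divisor `d` of `n`, the odd number `2n/d − d` is prime to `3`, and on
such numbers `ξ = −χ₄`; as `χ₄(2e − d) = (−1)^(e+1) χ₄(d)` for odd `d`, this gives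
`a₆(n) = (−1)^n ∑_{d ∣ n} χ₄(d)`. The theorem is then Jacobi's formula `r(n) = 4 ∑_{d ∣ n} χ₄(d)`,
proved in `ℤ[i]`. An element whose norm is a product `m n` of coprime factors splits as a product
of elements of norms `m` and `n`, uniquely up to the four units, so `r(m n) = r(m) r(n) / 4`. For a
prime power, the elements of norm `p^k` are the associates of `(1 + i)^k` if `p = 2`, the
`u π^j π̄^(k−j)` with `π π̄ = p` if `p ≡ 1 (mod 4)`, and the associates of `p^(k/2)` if
`p ≡ 3 (mod 4)` (none for odd `k`).
-/

open Finset ZMod Zsqrtd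

lemma sum_divisors_χ₄_mul {m n : ℕ} (hmn : m.Coprime n) :
    ∑ d ∈ (m * n).divisors, χ₄ d = (∑ d ∈ m.divisors, χ₄ d) * ∑ d ∈ n.divisors, χ₄ d := by
  let χ : ArithmeticFunction ℤ := ⟨fun n => χ₄ n, by simp⟩
  have hχ : χ.IsMultiplicative :=
    ArithmeticFunction.IsMultiplicative.iff_ne_zero.2 ⟨by simp [χ], fun {m n} _ _ _ =>
      show χ₄ ((m * n : ℕ) : ZMod 4) = χ₄ m * χ₄ n by rw [Nat.cast_mul, map_mul]⟩
  have := (ArithmeticFunction.isMultiplicative_zeta.natCast.mul hχ).map_mul_of_coprime hmn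
  simp only [ArithmeticFunction.coe_zeta_mul_apply] at this
  exact this

lemma sum_divisors_χ₄_prime_pow {p : ℕ} (hp : p.Prime) (k : ℕ) :
    ∑ d ∈ (p ^ k).divisors, χ₄ d = ∑ i ∈ range (k + 1), χ₄ p ^ i := by
  simp only [Nat.sum_divisors_prime_pow hp, Nat.cast_pow, map_pow]

namespace GaussianInt

local notation "ℤ[i]" => GaussianInt

lemma norm_eq_re_sq_add_im_sq (z : ℤ[i]) : z.norm = z.re ^ 2 + z.im ^ 2 := by
  rw [norm_def]; ring

lemma norm_pow (z : ℤ[i]) (k : ℕ) : (z ^ k).norm = z.norm ^ k :=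
  map_pow normMonoidHom z k

lemma norm_dvd_norm {a b : ℤ[i]} (h : a ∣ b) : a.norm ∣ b.norm :=
  map_dvd normMonoidHom h

lemma norm_eq_one_iff_isUnit {z : ℤ[i]} : z.norm = 1 ↔ IsUnit z :=
  norm_eq_one_iff' (by norm_num) z

lemma mul_star_eq_one_of_norm_eq_one {u : ℤ[i]} (hu : u.norm = 1) : u * star u = 1 := by
  rw [← norm_eq_mul_conj, hu, Int.cast_one]

lemma star_dvd_star {a b : ℤ[i]} (h : a ∣ b) : star a ∣ star b :=
  map_dvd (starRingEnd ℤ[i]) h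

lemma prime_of_prime_norm {z : ℤ[i]} (h : Prime z.norm) : Prime z := by
  rw [← irreducible_iff_prime]
  refine ⟨fun hu => h.not_isUnit (by rw [norm_eq_one_iff_isUnit.2 hu]; exact isUnit_one),
    fun a b hab => ?_⟩
  have := h.irreducible.isUnit_or_isUnit (show z.norm = a.norm * b.norm by rw [hab, norm_mul])
  simpa only [Int.isUnit_iff_natAbs_eq, norm_eq_one_iff] using this

lemma exists_prime_norm_eq {p : ℕ} (hp : p.Prime) (h4 : p % 4 ≠ 3) :
    ∃ π : ℤ[i], Prime π ∧ π.norm = p := by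
  have := Fact.mk hp
  obtain ⟨a, b, hab⟩ := Nat.Prime.sq_add_sq h4
  have hnorm : (⟨a, b⟩ : ℤ[i]).norm = p := by
    rw [norm_eq_re_sq_add_im_sq]; dsimp only; exact_mod_cast hab
  exact ⟨_, prime_of_prime_norm (hnorm ▸ Nat.prime_iff_prime_int.mp hp), hnorm⟩

lemma exists_nat_prime_dvd_of_prime {π : ℤ[i]} (hπ : Prime π) :
    ∃ p : ℕ, p.Prime ∧ π ∣ (p : ℤ[i]) := by
  have hk : π.norm.natAbs ≠ 0 := by simpa using hπ.ne_zero
  have hdvd : π ∣ ((π.norm.natAbs.primeFactorsList.map (Nat.cast : ℕ → ℤ[i])).prod) := by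
    rw [← Nat.cast_list_prod, Nat.prod_primeFactorsList hk, natCast_natAbs_norm, norm_eq_mul_conj]
    exact dvd_mul_right _ _
  obtain ⟨_, hmem, hp⟩ := (hπ.dvd_prod_iff).1 hdvd
  obtain ⟨p, hp_mem, rfl⟩ := List.mem_map.1 hmem
  exact ⟨p, Nat.prime_of_mem_primeFactorsList hp_mem, hp⟩

lemma isPrimePow_natAbs_norm {π : ℤ[i]} (hπ : Prime π) : IsPrimePow π.norm.natAbs := by
  obtain ⟨p, hp, hπp⟩ := exists_nat_prime_dvd_of_prime hπ
  have hdvd : π.norm.natAbs ∣ p ^ 2 := by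
    have := Int.natAbs_dvd_natAbs.2 (norm_dvd_norm hπp)
    rwa [norm_natCast, Int.natAbs_mul, Int.natAbs_natCast, ← sq] at this
  obtain ⟨i, hi, hk⟩ := (Nat.dvd_prime_pow hp).1 hdvd
  have hi0 : i ≠ 0 := by
    rintro rfl
    exact hπ.not_isUnit (norm_eq_one_iff.1 (by simpa using hk))
  exact hk ▸ hp.isPrimePow.pow hi0

lemma exists_mul_eq_of_norm_eq_mul {m n : ℕ} (hmn : m.Coprime n) {z : ℤ[i]}
    (hz : z.norm = m * n) : ∃ a b : ℤ[i], z = a * b ∧ a.norm = m ∧ b.norm = n := by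
  induction hk : m * n using Nat.strong_induction_on generalizing m n z with
  | _ k IH =>
  rcases eq_or_ne z 0 with rfl | hz0
  · rcases Nat.mul_eq_zero.1 (by exact_mod_cast hz.symm.trans norm_zero : m * n = 0) with rfl | rfl
    · exact ⟨0, 1, by simp, norm_zero, by simp [(Nat.coprime_zero_left n).1 hmn]⟩
    · exact ⟨1, 0, by simp, by simp [(Nat.coprime_zero_right m).1 hmn], norm_zero⟩
  by_cases hu : IsUnit z
  · have : m * n = 1 := by exact_mod_cast hz.symm.trans (norm_eq_one_iff_isUnit.2 hu)
    obtain ⟨rfl, rfl⟩ := mul_eq_one.1 this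
    exact ⟨1, z, (one_mul z).symm, norm_one, by rw [hz]; simp⟩
  obtain ⟨π, hπ, w, rfl⟩ := WfDvdMonoid.exists_irreducible_factor hu hz0
  obtain ⟨q, hq, hπq⟩ : ∃ q : ℕ, IsPrimePow q ∧ π.norm = q :=
    ⟨_, isPrimePow_natAbs_norm hπ.prime, (abs_natCast_norm π).symm⟩
  have hpos : 0 < k := by rw [← hk]; exact_mod_cast hz ▸ norm_pos.2 hz0
  rw [Zsqrtd.norm_mul, hπq] at hz
  have hq0 : (q : ℤ) ≠ 0 := by exact_mod_cast hq.ne_zero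
  have hlt : ∀ c, k = q * c → c < k := fun c hc => by
    rw [hc] at hpos ⊢; exact lt_mul_left (Nat.pos_of_mul_pos_left hpos) hq.two_le
  -- the norm of `π` is a prime power, so it divides `m` or `n`: peel `π` off that side
  rcases (hmn.isPrimePow_dvd_mul hq).1 (by exact_mod_cast Dvd.intro _ hz) with ⟨m', rfl⟩ | ⟨n', rfl⟩
  · have hw : w.norm = m' * n := mul_left_cancel₀ hq0 (by rw [hz]; push_cast; ring)
    obtain ⟨a, b, rfl, ha, hb⟩ := IH (m' * n) (hlt _ (by rw [← hk, mul_assoc]))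
      (Nat.Coprime.coprime_mul_left hmn) hw rfl
    exact ⟨π * a, b, by ring, by rw [Zsqrtd.norm_mul, ha, hπq]; push_cast; ring, hb⟩
  · have hw : w.norm = m * n' := mul_left_cancel₀ hq0 (by rw [hz]; push_cast; ring)
    obtain ⟨a, b, rfl, ha, hb⟩ := IH (m * n') (hlt _ (by rw [← hk, mul_left_comm]))
      (Nat.Coprime.coprime_mul_left_right hmn) hw rfl
    exact ⟨a, π * b, by ring, ha, by rw [Zsqrtd.norm_mul, hb, hπq]; push_cast; ring⟩

lemma isCoprime_of_coprime_natAbs_norm {a b : ℤ[i]}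
    (h : a.norm.natAbs.Coprime b.norm.natAbs) : IsCoprime a b := by
  refine isCoprime_of_prime_dvd (by rintro ⟨rfl, rfl⟩; simp at h) fun π hπ ha hb => ?_
  have hdvd : ∀ {x : ℤ[i]}, π ∣ x → π.norm.natAbs ∣ x.norm.natAbs := fun hx =>
    Int.natAbs_dvd_natAbs.2 (norm_dvd_norm hx)
  exact hπ.not_isUnit (norm_eq_one_iff.1 (Nat.eq_one_of_dvd_coprimes h (hdvd ha) (hdvd hb)))

noncomputable def normFinset (n : ℕ) : Finset ℤ[i] :=
  ((Icc (-n : ℤ) n ×ˢ Icc (-n : ℤ) n).image fun p => (⟨p.1, p.2⟩ : ℤ[i])).filter (·.norm = n)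

lemma mem_normFinset {n : ℕ} {z : ℤ[i]} : z ∈ normFinset n ↔ z.norm = n := by
  refine ⟨fun h => (mem_filter.1 h).2,
    fun h => mem_filter.2 ⟨mem_image.2 ⟨(z.re, z.im), ?_, rfl⟩, h⟩⟩
  have hsq := norm_eq_re_sq_add_im_sq z
  have hbound : ∀ x : ℤ, x ^ 2 ≤ n → -(n : ℤ) ≤ x ∧ x ≤ n := fun x hx =>
    ⟨by nlinarith [sq_nonneg (x + 1)], by nlinarith [sq_nonneg (x - 1)]⟩
  simp only [mem_product, mem_Icc]
  exact ⟨hbound _ (by nlinarith [sq_nonneg z.im]), hbound _ (by nlinarith [sq_nonneg z.re])⟩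

lemma normFinset_one : normFinset 1 = {1, -1, ⟨0, 1⟩, ⟨0, -1⟩} := by decide

lemma card_normFinset_one : #(normFinset 1) = 4 := by rw [normFinset_one]; rfl

lemma card_fiber_mul_eq_four {m n : ℕ} (hm : 0 < m) (hmn : m.Coprime n) {z : ℤ[i]}
    (hz : z.norm = m * n) :
    #{p ∈ normFinset m ×ˢ normFinset n | p.1 * p.2 = z} = 4 := by
  obtain ⟨a, b, rfl, ha, hb⟩ := exists_mul_eq_of_norm_eq_mul hmn hz
  have ha0 : a ≠ 0 := by rintro rfl; rw [norm_zero] at ha; exact hm.ne (by exact_mod_cast ha)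
  rw [← card_normFinset_one]
  symm
  refine card_bij (fun u _ => (a * u, star u * b)) (fun u hu => ?_) (fun u _ v _ h => ?_)
    fun p hp => ?_
  · have hu := mem_normFinset.1 hu
    simp only [mem_filter, mem_product, mem_normFinset, Zsqrtd.norm_mul, norm_conj, ha, hb, hu]
    refine ⟨⟨by norm_num, by norm_num⟩, ?_⟩
    calc a * u * (star u * b) = a * b * (u * star u) := by ring
      _ = a * b := by rw [mul_star_eq_one_of_norm_eq_one (by simpa using hu), mul_one]
  · exact mul_left_cancel₀ ha0 (congrArg Prod.fst h)
  · obtain ⟨⟨hx, hy⟩, hxy⟩ : (p.1 ∈ normFinset m ∧ p.2 ∈ normFinset n) ∧ p.1 * p.2 = a * b := by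
      simpa only [mem_filter, mem_product] using hp
    rw [mem_normFinset] at hx hy
    have hcop : IsCoprime a p.2 := isCoprime_of_coprime_natAbs_norm (by simpa [ha, hy] using hmn)
    obtain ⟨u, hu⟩ := hcop.dvd_of_dvd_mul_right (Dvd.intro _ hxy.symm)
    have hu1 : u.norm = 1 := by
      have : (m : ℤ) * u.norm = m * 1 := by rw [← ha, ← Zsqrtd.norm_mul, ← hu, hx, ha, mul_one]
      exact mul_left_cancel₀ (by exact_mod_cast hm.ne') this
    have hub : u * p.2 = b := mul_left_cancel₀ ha0 (by rw [← mul_assoc, ← hu, hxy])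
    refine ⟨u, mem_normFinset.2 (by rw [hu1]; norm_num), Prod.ext hu.symm ?_⟩
    rw [← hub, ← mul_assoc, mul_comm (star u), mul_star_eq_one_of_norm_eq_one hu1, one_mul]

lemma card_normFinset_mul {m n : ℕ} (hm : 0 < m) (hmn : m.Coprime n) :
    #(normFinset m) * #(normFinset n) = 4 * #(normFinset (m * n)) := by
  have hmaps : Set.MapsTo (fun p : ℤ[i] × ℤ[i] => p.1 * p.2) ↑(normFinset m ×ˢ normFinset n)
      ↑(normFinset (m * n)) := fun p hp => by
    obtain ⟨hx, hy⟩ := mem_product.1 (mem_coe.1 hp)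
    rw [mem_coe, mem_normFinset, Zsqrtd.norm_mul, mem_normFinset.1 hx, mem_normFinset.1 hy]
    push_cast; ring
  rw [← card_product, card_eq_sum_card_fiberwise hmaps,
    sum_congr rfl fun z hz => card_fiber_mul_eq_four hm hmn (by exact_mod_cast mem_normFinset.1 hz),
    sum_const, smul_eq_mul, mul_comm]

lemma card_normFinset_eq_four_of_forall_associated {n : ℕ} {w : ℤ[i]} (hw0 : w ≠ 0)
    (hw : w.norm = n) (h : ∀ z : ℤ[i], z.norm = n → Associated w z) : #(normFinset n) = 4 := by
  suffices normFinset n = (normFinset 1).image (· * w) by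
    rw [this, card_image_of_injective _ (mul_left_injective₀ hw0), card_normFinset_one]
  ext z
  simp only [mem_image, mem_normFinset]
  constructor
  · intro hz
    obtain ⟨u, rfl⟩ := h z hz
    exact ⟨u, by simpa using norm_eq_one_iff_isUnit.2 u.isUnit, mul_comm _ _⟩
  · rintro ⟨u, hu, rfl⟩
    rw [Zsqrtd.norm_mul, hu, hw]; push_cast; ring

lemma exists_associated_pow_of_norm_eq_pow {p k : ℕ} (hp : p.Prime) (hp3 : p % 4 = 3)
    {z : ℤ[i]} (hz : z.norm = p ^ k) : ∃ i, k = 2 * i ∧ Associated ((p : ℤ[i]) ^ i) z := by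
  have := Fact.mk hp
  have hdvd : z ∣ (p : ℤ[i]) ^ k := ⟨star z, by rw [← norm_eq_mul_conj, hz]; push_cast; rfl⟩
  obtain ⟨i, -, hi⟩ := (dvd_prime_pow (prime_of_nat_prime_of_mod_four_eq_three p hp3) k).1 hdvd
  refine ⟨i, Nat.pow_right_injective hp.two_le ?_, hi.symm⟩
  have : (p : ℤ) ^ k = (p : ℤ) ^ (2 * i) := by
    rw [← hz, norm_eq_of_associated (by norm_num) hi, norm_pow, norm_natCast, pow_mul, sq]
  exact_mod_cast this

lemma card_normFinset_prime_pow_of_mod_four_eq_three {p : ℕ} (hp : p.Prime) (hp3 : p % 4 = 3)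
    (k : ℕ) : #(normFinset (p ^ k)) = if Even k then 4 else 0 := by
  split_ifs with hk
  · obtain ⟨i, rfl⟩ := hk
    refine card_normFinset_eq_four_of_forall_associated (w := (p : ℤ[i]) ^ i)
      (pow_ne_zero _ (by exact_mod_cast hp.ne_zero)) (by push_cast [norm_pow, norm_natCast]; ring)
      fun z hz => ?_
    obtain ⟨j, hij, hj⟩ := exists_associated_pow_of_norm_eq_pow hp hp3 (by exact_mod_cast hz)
    obtain rfl : j = i := by omega
    exact hj
  · refine card_eq_zero.2 (eq_empty_of_forall_notMem fun z hz => hk ?_)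
    obtain ⟨i, rfl, -⟩ := exists_associated_pow_of_norm_eq_pow hp hp3
      (by exact_mod_cast mem_normFinset.1 hz)
    exact even_two_mul i

lemma exists_eq_mul_pow_mul_star_pow {π : ℤ[i]} {p : ℕ} (hπ : Prime π) (hπp : π.norm = p)
    {k : ℕ} {z : ℤ[i]} (hz : z.norm = p ^ k) :
    ∃ u : ℤ[i], u.norm = 1 ∧ ∃ j ≤ k, z = u * π ^ j * star π ^ (k - j) := by
  induction k generalizing z with
  | zero => exact ⟨z, by simpa using hz, 0, le_rfl, by simp⟩
  | succ k ih =>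
    have hp0 : (p : ℤ) ≠ 0 := hπp ▸ (norm_pos.2 hπ.ne_zero).ne'
    have hcancel : ∀ {c w : ℤ[i]}, c.norm = p → z = c * w → w.norm = p ^ k := fun hc hw =>
      mul_left_cancel₀ hp0 (by rw [← hc, ← Zsqrtd.norm_mul, ← hw, hz, hc, pow_succ, mul_comm])
    have hπz : π ∣ z * star z := by
      rw [← norm_eq_mul_conj, hz, ← hπp, Int.cast_pow, norm_eq_mul_conj]
      exact dvd_pow (dvd_mul_right _ _) k.succ_ne_zero
    rcases hπ.dvd_or_dvd hπz with ⟨w, hw⟩ | h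
    · obtain ⟨u, hu, j, hj, rfl⟩ := ih (hcancel hπp hw)
      refine ⟨u, hu, j + 1, by omega, ?_⟩
      rw [hw, Nat.add_sub_add_right]; ring
    · obtain ⟨w, hw⟩ : star π ∣ z := by simpa using star_dvd_star h
      obtain ⟨u, hu, j, hj, rfl⟩ := ih (hcancel (by rw [norm_conj, hπp]) hw)
      refine ⟨u, hu, j, by omega, ?_⟩
      rw [hw, Nat.sub_add_comm hj]; ring

lemma not_dvd_star_of_norm_eq {π : ℤ[i]} {p : ℕ} (hp : p.Prime) (hp2 : p ≠ 2)
    (hπp : π.norm = p) : ¬ π ∣ star π := by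
  rintro ⟨c, hc⟩
  have hp0 : (p : ℤ) ≠ 0 := by exact_mod_cast hp.ne_zero
  have hc1 : c.norm = 1 :=
    mul_left_cancel₀ hp0 (by rw [← hπp, ← Zsqrtd.norm_mul, ← hc, norm_conj, mul_one])
  have hsq : (p : ℤ) = π.re ^ 2 + π.im ^ 2 := hπp ▸ norm_eq_re_sq_add_im_sq π
  have hpZ := Nat.prime_iff_prime_int.mp hp
  have hp_odd : ¬ (2 : ℤ) ∣ p := fun h =>
    hp2 ((Nat.prime_dvd_prime_iff_eq Nat.prime_two hp).1 (by exact_mod_cast h)).symm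
  -- `star π = π * c` for one of the four units `c`: this forces `π.im = 0`, `π.re = 0` or
  -- `π.re = ± π.im`, making `p` a square or even
  have hmem : c ∈ normFinset 1 := mem_normFinset.2 (by simpa using hc1)
  rw [normFinset_one] at hmem
  simp only [mem_insert, mem_singleton] at hmem
  rcases hmem with rfl | rfl | rfl | rfl <;>
    simp only [Zsqrtd.ext_iff, re_star, im_star, re_mul, im_mul, re_neg, im_neg, mul_zero, mul_one,
      one_mul, neg_mul, mul_neg, neg_neg, zero_add, add_zero, neg_inj, true_and, and_true,
      Int.reduceNeg] at hc
  · exact hpZ.not_isSquare ⟨π.re, by rw [hsq, show π.im = 0 by linarith]; ring⟩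
  · exact hpZ.not_isSquare ⟨π.im, by rw [hsq, show π.re = 0 by linarith]; ring⟩
  · exact hp_odd ⟨π.im ^ 2, by rw [hsq, hc.1]; ring⟩
  · exact hp_odd ⟨π.im ^ 2, by rw [hsq, hc.1]; ring⟩

lemma emultiplicity_mul_pow_mul_star_pow {π u : ℤ[i]} (hπ : Prime π) (hπ' : ¬ π ∣ star π)
    (hu : IsUnit u) (j m : ℕ) : emultiplicity π (u * π ^ j * star π ^ m) = j := by
  rw [emultiplicity_eq_coe]
  refine ⟨dvd_mul_of_dvd_left (dvd_mul_left _ _) _, fun h => ?_⟩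
  rw [show u * π ^ j * star π ^ m = π ^ j * (u * star π ^ m) by ring, pow_succ,
    mul_dvd_mul_iff_left (pow_ne_zero _ hπ.ne_zero)] at h
  rcases hπ.dvd_or_dvd h with h | h
  · exact hπ.not_isUnit (isUnit_of_dvd_unit h hu)
  · exact hπ' (hπ.dvd_of_dvd_pow h)

lemma card_normFinset_prime_pow_of_mod_four_eq_one {p : ℕ} (hp : p.Prime) (hp1 : p % 4 = 1)
    (k : ℕ) : #(normFinset (p ^ k)) = 4 * (k + 1) := by
  obtain ⟨π, hπ, hπp⟩ := exists_prime_norm_eq hp (by omega)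
  have hπ' := not_dvd_star_of_norm_eq hp (by omega) hπp
  rw [← card_normFinset_one, ← card_range (k + 1), ← card_product]
  symm
  refine card_bij (fun q _ => q.1 * π ^ q.2 * star π ^ (k - q.2)) (fun q hq => ?_)
    (fun q hq q' hq' h => ?_) fun z hz => ?_
  · obtain ⟨hu, hj⟩ := mem_product.1 hq
    rw [mem_normFinset, Zsqrtd.norm_mul, Zsqrtd.norm_mul, norm_pow, norm_pow, norm_conj, hπp,
      mem_normFinset.1 hu, Nat.cast_one, one_mul, ← pow_add,
      Nat.add_sub_cancel' (Nat.lt_succ_iff.1 (mem_range.1 hj)), Nat.cast_pow]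
  · have hunit : ∀ {q : ℤ[i] × ℕ}, q ∈ normFinset 1 ×ˢ range (k + 1) → IsUnit q.1 := fun hq =>
      norm_eq_one_iff_isUnit.1 (by simpa using mem_normFinset.1 (mem_product.1 hq).1)
    have hj : q.2 = q'.2 := by
      have := congrArg (emultiplicity π) h
      rwa [emultiplicity_mul_pow_mul_star_pow hπ hπ' (hunit hq),
        emultiplicity_mul_pow_mul_star_pow hπ hπ' (hunit hq'), Nat.cast_inj] at this
    obtain ⟨u, j⟩ := q
    obtain ⟨u', j'⟩ := q'
    dsimp only at h hj
    subst hj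
    have h' := mul_right_cancel₀ (pow_ne_zero (k - j) (star_ne_zero.2 hπ.ne_zero)) h
    exact Prod.ext (mul_right_cancel₀ (pow_ne_zero j hπ.ne_zero) h') rfl
  · obtain ⟨u, hu, j, hj, rfl⟩ :=
      exists_eq_mul_pow_mul_star_pow hπ hπp (by exact_mod_cast mem_normFinset.1 hz)
    exact ⟨(u, j), mem_product.2 ⟨mem_normFinset.2 (by simpa using hu), mem_range.2 (by omega)⟩,
      rfl⟩

lemma card_normFinset_two_pow (k : ℕ) : #(normFinset (2 ^ k)) = 4 := by
  set π : ℤ[i] := ⟨1, 1⟩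
  have hπ2 : π.norm = 2 := by decide
  have hπ : Prime π := prime_of_prime_norm (hπ2 ▸ Int.prime_two)
  have hπ_star : Associated π (star π) :=
    ⟨⟨⟨0, -1⟩, ⟨0, 1⟩, by decide, by decide⟩, by decide⟩
  refine card_normFinset_eq_four_of_forall_associated (w := π ^ k) (pow_ne_zero _ hπ.ne_zero)
    (by rw [norm_pow, hπ2]; push_cast; rfl) fun z hz => ?_
  obtain ⟨u, hu, j, hj, rfl⟩ := exists_eq_mul_pow_mul_star_pow hπ hπ2 (by exact_mod_cast hz)
  rw [mul_assoc, ← Nat.add_sub_cancel' hj, pow_add, Nat.add_sub_cancel_left]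
  exact ((Associated.refl _).mul_mul (hπ_star.pow_pow)).trans
    (associated_unit_mul_left _ _ (norm_eq_one_iff_isUnit.1 hu)).symm

theorem card_normFinset {n : ℕ} (hn : 0 < n) :
    (#(normFinset n) : ℤ) = 4 * ∑ d ∈ n.divisors, χ₄ d := by
  induction n using Nat.recOnPosPrimePosCoprime with
  | prime_pow p k hp _ =>
    rw [sum_divisors_χ₄_prime_pow hp]
    rcases hp.eq_two_or_odd' with rfl | hodd
    · simp [card_normFinset_two_pow, sum_range_succ']
    · rcases Nat.odd_mod_four_iff.1 (Nat.odd_iff.1 hodd) with hp4 | hp4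
      · simp [card_normFinset_prime_pow_of_mod_four_eq_one hp hp4, χ₄_nat_one_mod_four hp4]
      · rw [card_normFinset_prime_pow_of_mod_four_eq_three hp hp4, χ₄_nat_three_mod_four hp4,
          neg_one_geom_sum]
        by_cases hk : Even k <;> simp [hk, Nat.even_add_one]
  | zero => omega
  | one => simp [card_normFinset_one]
  | coprime a b ha hb hab iha ihb =>
    have h : (#(normFinset a) * #(normFinset b) : ℤ) = 4 * #(normFinset (a * b)) := by
      exact_mod_cast card_normFinset_mul (by omega) hab
    rw [iha (by omega), ihb (by omega)] at h
    rw [sum_divisors_χ₄_mul hab]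
    linarith

lemma card_normFinset_eq_r (n : ℕ) : #(normFinset n) = r n := by
  rw [r, ← Set.ncard_coe_finset]
  refine Set.ncard_congr (fun z _ => (z.re, z.im)) (fun z hz => ?_) (fun z w _ _ h => ?_)
    fun p hp => ⟨⟨p.1, p.2⟩, ?_, rfl⟩
  · rw [mem_coe, mem_normFinset, norm_eq_re_sq_add_im_sq] at hz; exact hz
  · simp only [Prod.ext_iff] at h; exact Zsqrtd.ext h.1 h.2
  · rw [mem_coe, mem_normFinset, norm_eq_re_sq_add_im_sq]; exact hp

end GaussianInt

lemma xi_eq_neg_χ₄ {m : ℤ} (hm : m % 2 = 1) (h3 : ¬ 3 ∣ m) : xi m = -χ₄ m := by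
  rw [χ₄_int_eq_if_mod_four]
  unfold xi
  split_ifs <;> omega

lemma χ₄_two_mul_sub {d : ℤ} (hd : d % 2 = 1) (e : ℕ) :
    χ₄ (2 * e - d : ℤ) = -(-1) ^ e * χ₄ d := by
  rw [χ₄_int_eq_if_mod_four, χ₄_int_eq_if_mod_four]
  rcases Nat.even_or_odd e with ⟨k, rfl⟩ | ⟨k, rfl⟩
  · rw [Even.neg_one_pow ⟨k, rfl⟩]
    push_cast
    split_ifs <;> omega
  · rw [Odd.neg_one_pow ⟨k, rfl⟩]
    push_cast
    split_ifs <;> omega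

lemma not_three_dvd_two_mul_sub {d e : ℤ} (h : d * e % 3 = 1) : ¬ 3 ∣ 2 * e - d := by
  rw [Int.mul_emod] at h
  have := Int.emod_nonneg d (by norm_num : (3 : ℤ) ≠ 0)
  have := Int.emod_lt_of_pos d (by norm_num : (0 : ℤ) < 3)
  have := Int.emod_nonneg e (by norm_num : (3 : ℤ) ≠ 0)
  have := Int.emod_lt_of_pos e (by norm_num : (0 : ℤ) < 3)
  interval_cases hd : d % 3 <;> interval_cases he : e % 3 <;> omega

lemma a6_eq_neg_one_pow_mul_sum_χ₄ {n : ℕ} (hn : n % 3 = 1) :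
    a6 n = (-1) ^ n * ∑ d ∈ n.divisors, χ₄ d := by
  have hodd_of_ne : ∀ d ∈ n.divisors, χ₄ d ≠ 0 → Odd d := fun d _ hd => by
    rw [χ₄_nat_eq_if_mod_four] at hd
    exact Nat.odd_iff.mpr (by by_contra h; simp_all)
  rw [a6, ← sum_filter_of_ne hodd_of_ne, mul_sum]
  refine sum_congr rfl fun d hd => ?_
  obtain ⟨hdiv, hodd⟩ := mem_filter.mp hd
  obtain ⟨e, rfl⟩ := Nat.dvd_of_mem_divisors hdiv
  have hd0 : (d : ℤ) ≠ 0 := by exact_mod_cast hodd.pos.ne'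
  have hd2 : (d : ℤ) % 2 = 1 := by exact_mod_cast Nat.odd_iff.mp hodd
  have hsign : (-1 : ℤ) ^ (d * e) = (-1) ^ e := by
    rw [neg_one_pow_eq_pow_mod_two, neg_one_pow_eq_pow_mod_two (n := e), Nat.mul_mod,
      Nat.odd_iff.mp hodd, one_mul, Nat.mod_mod]
  push_cast
  rw [Int.mul_ediv_cancel_left _ hd0, xi_eq_neg_χ₄ (by omega), χ₄_two_mul_sub hd2, hsign]
  · rw [Int.cast_natCast]; ring
  · exact not_three_dvd_two_mul_sub (by exact_mod_cast hn)

theorem a6_three_mul_add_one (m : ℕ) :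
    4 * a6 (3 * m + 1) = (-1) ^ (m + 1) * (r (3 * m + 1) : ℤ) := by
  rw [a6_eq_neg_one_pow_mul_sum_χ₄ (by omega), ← GaussianInt.card_normFinset_eq_r,
    GaussianInt.card_normFinset (by omega)]
  have hsign : (-1 : ℤ) ^ (3 * m + 1) = (-1) ^ (m + 1) := by
    rw [show 3 * m + 1 = 2 * m + (m + 1) by ring, pow_add, pow_mul, neg_one_sq, one_pow, one_mul]
  rw [hsign]; ring
end

section
/- For every integer n ≥ 1, a₆(n) = 0 if and only if n is not a sum of two squares, i.e. ∑_{d | n, d odd, d > 0} ξ(2n/d − d) = 0 if and only if there exist no integers x, y with x² + y² = n. -/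
/-!
For odd `d ∣ n`, `ξ(2n/d − d) = ±χ₄(d)·(1 − 3·[3 ∣ d + n/d])`, with a sign depending only on the
parity of `n`. Hence `a₆(n) = ±(r(n) − 3 t(n))`, where `r(n) = ∑_{d ∣ n} χ₄(d)` and `t(n)` is the
same sum restricted to `3 ∣ d + n/d`. As `d · (n/d) = n`, that restriction does not depend on `d`
when `3 ∤ n`, and forces `3 ∣ d` and `3 ∣ n/d` when `3 ∣ n`; together with `r(9k) = r(k)` this
gives `t(n) ∈ {0, r(n), −r(n)}`, so `a₆(n) = 0` iff `r(n) = 0`. Finally `r` is multiplicative and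
vanishes exactly when some prime `≡ 3 (mod 4)` divides `n` to an odd power, which is the classical
criterion for `n` not being a sum of two squares.
-/

open ZMod ArithmeticFunction
open scoped ArithmeticFunction.zeta

lemma xi_eq_of_odd {x : ℤ} (hx : Odd x) : xi x = -χ₄ x * if 3 ∣ x then -2 else 1 := by
  rw [Int.odd_iff] at hx
  rw [χ₄_int_eq_if_mod_four, xi]
  split_ifs <;> omega

lemma χ₄_two_mul_sub_of_odd (N : ℤ) {d : ℤ} (hd : Odd d) :
    χ₄ (2 * N - d : ℤ) = (if Even N then -1 else 1) * χ₄ d := by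
  rw [Int.odd_iff] at hd
  simp only [χ₄_int_eq_if_mod_four, Int.even_iff]
  split_ifs <;> omega

def χ₄DivisorSum : ArithmeticFunction ℤ := toArithmeticFunction (χ₄ ·) * ζ

lemma χ₄DivisorSum_apply (n : ℕ) : χ₄DivisorSum n = ∑ d ∈ n.divisors, χ₄ d := by
  rw [χ₄DivisorSum, coe_mul_zeta_apply]
  refine Finset.sum_congr rfl fun d hd => ?_
  simp [toArithmeticFunction, Nat.ne_of_gt (Nat.pos_of_mem_divisors hd)]

lemma isMultiplicative_χ₄DivisorSum : χ₄DivisorSum.IsMultiplicative :=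
  (DirichletCharacter.isMultiplicative_toArithmeticFunction (N := 4) χ₄).mul
    isMultiplicative_zeta.natCast

lemma χ₄DivisorSum_prime_pow {p : ℕ} (hp : p.Prime) (k : ℕ) :
    χ₄DivisorSum (p ^ k) = ∑ i ∈ Finset.range (k + 1), χ₄ p ^ i := by
  simp only [χ₄DivisorSum_apply, Nat.sum_divisors_prime_pow hp, Nat.cast_pow, map_pow]

lemma χ₄DivisorSum_prime_pow_eq_zero_iff {p : ℕ} (hp : p.Prime) (k : ℕ) :
    χ₄DivisorSum (p ^ k) = 0 ↔ p % 4 = 3 ∧ Odd k := by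
  rw [χ₄DivisorSum_prime_pow hp, χ₄_nat_eq_if_mod_four]
  rcases hp.eq_two_or_odd with rfl | hodd
  · simp [Finset.sum_range_succ']
  · split_ifs with h2 h1
    · omega
    · simp only [one_pow, Finset.sum_const, Finset.card_range, nsmul_eq_mul, mul_one]
      omega
    · rw [neg_one_geom_sum]
      simp [Nat.even_add_one]
      omega

lemma χ₄DivisorSum_ne_zero_iff {n : ℕ} (hn : n ≠ 0) :
    χ₄DivisorSum n ≠ 0 ↔ ∃ x y, n = x ^ 2 + y ^ 2 := by
  rw [Nat.eq_sq_add_sq_iff, isMultiplicative_χ₄DivisorSum.multiplicative_factorization _ hn,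
    Finsupp.prod, Finset.prod_ne_zero_iff, Nat.support_factorization]
  refine forall₂_congr fun p hp => ?_
  have hp := Nat.prime_of_mem_primeFactors hp
  rw [Ne, χ₄DivisorSum_prime_pow_eq_zero_iff hp, ← Nat.factorization_def n hp,
    ← Nat.not_odd_iff_even]
  tauto

lemma χ₄DivisorSum_nine_mul (k : ℕ) : χ₄DivisorSum (9 * k) = χ₄DivisorSum k := by
  rcases eq_or_ne k 0 with rfl | hk
  · rfl
  obtain ⟨b, K, hK, rfl⟩ := Nat.exists_eq_pow_mul_and_not_dvd hk 3 (by norm_num)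
  have hcop (j : ℕ) : (3 ^ j).Coprime K :=
    Nat.Coprime.pow_left j ((Nat.Prime.coprime_iff_not_dvd Nat.prime_three).2 hK)
  have h3 : χ₄ (3 : ℕ) = -1 := χ₄_nat_three_mod_four rfl
  rw [← mul_assoc, show 9 * 3 ^ b = 3 ^ (b + 2) by ring,
    isMultiplicative_χ₄DivisorSum.map_mul_of_coprime (hcop _),
    isMultiplicative_χ₄DivisorSum.map_mul_of_coprime (hcop _),
    χ₄DivisorSum_prime_pow Nat.prime_three, χ₄DivisorSum_prime_pow Nat.prime_three, h3,
    neg_one_geom_sum, neg_one_geom_sum]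
  simp [Nat.even_add_one]

def χ₄DivisorSumThreeDvd (n : ℕ) : ℤ := ∑ d ∈ n.divisors with 3 ∣ d + n / d, χ₄ d

lemma three_dvd_add_iff_of_not_three_dvd_mul {d e : ℕ} (h : ¬ 3 ∣ d * e) :
    3 ∣ d + e ↔ d * e % 3 = 2 := by
  rw [Nat.dvd_iff_mod_eq_zero, Nat.mul_mod] at h
  rw [Nat.mul_mod]
  have hd := Nat.mod_lt d (show 3 > 0 by norm_num)
  have he := Nat.mod_lt e (show 3 > 0 by norm_num)
  interval_cases hd' : d % 3 <;> interval_cases he' : e % 3 <;> omega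

lemma three_dvd_add_iff_of_three_dvd_mul {d e : ℕ} (h : 3 ∣ d * e) :
    3 ∣ d + e ↔ 3 ∣ d ∧ 3 ∣ e := by
  rcases Nat.prime_three.dvd_mul.1 h with h | h <;> omega

lemma χ₄DivisorSumThreeDvd_of_not_three_dvd {n : ℕ} (hn : ¬ 3 ∣ n) :
    χ₄DivisorSumThreeDvd n = if n % 3 = 2 then χ₄DivisorSum n else 0 := by
  have hcond : ∀ d ∈ n.divisors, 3 ∣ d + n / d ↔ n % 3 = 2 := fun d hd => by
    rw [← Nat.mul_div_cancel' (Nat.dvd_of_mem_divisors hd)] at hn ⊢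
    rw [Nat.mul_div_cancel_left _ (Nat.pos_of_mem_divisors hd)]
    exact three_dvd_add_iff_of_not_three_dvd_mul hn
  rw [χ₄DivisorSumThreeDvd, Finset.filter_congr hcond, χ₄DivisorSum_apply]
  split_ifs with h <;> simp [h]

lemma χ₄DivisorSumThreeDvd_eq_zero {n : ℕ} (h3 : 3 ∣ n) (h9 : ¬ 9 ∣ n) :
    χ₄DivisorSumThreeDvd n = 0 := by
  refine Finset.sum_eq_zero fun d hd => absurd ?_ h9
  obtain ⟨hd, hdvd⟩ := Finset.mem_filter.1 hd
  obtain ⟨e, rfl⟩ := Nat.dvd_of_mem_divisors hd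
  rw [Nat.mul_div_cancel_left _ (Nat.pos_of_mem_divisors hd)] at hdvd
  obtain ⟨⟨a, rfl⟩, ⟨b, rfl⟩⟩ := (three_dvd_add_iff_of_three_dvd_mul h3).1 hdvd
  exact ⟨a * b, by ring⟩

lemma χ₄DivisorSumThreeDvd_nine_mul (k : ℕ) :
    χ₄DivisorSumThreeDvd (9 * k) = -χ₄DivisorSum k := by
  have hset : (9 * k).divisors.filter (fun d => 3 ∣ d + 9 * k / d) =
      k.divisors.image (3 * ·) := by
    ext d
    simp only [Finset.mem_filter, Finset.mem_image, Nat.mem_divisors]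
    constructor
    · rintro ⟨⟨⟨f, hf⟩, hk⟩, hdvd⟩
      have hd : 0 < d := Nat.pos_of_ne_zero (by rintro rfl; simp_all)
      rw [hf, Nat.mul_div_cancel_left _ hd] at hdvd
      obtain ⟨⟨a, rfl⟩, ⟨b, rfl⟩⟩ :=
        (three_dvd_add_iff_of_three_dvd_mul ⟨3 * k, by rw [← hf]; ring⟩).1 hdvd
      exact ⟨a, ⟨⟨b, by linarith⟩, by simpa using hk⟩, rfl⟩
    · rintro ⟨e, ⟨⟨g, rfl⟩, hk⟩, rfl⟩
      have he : 0 < e := Nat.pos_of_ne_zero (by rintro rfl; simp_all)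
      refine ⟨⟨⟨3 * g, by ring⟩, by positivity⟩, ?_⟩
      rw [show 9 * (e * g) = 3 * e * (3 * g) by ring, Nat.mul_div_cancel_left _ (by positivity)]
      omega
  rw [χ₄DivisorSumThreeDvd, hset, Finset.sum_image (by simp), χ₄DivisorSum_apply,
    ← Finset.sum_neg_distrib]
  refine Finset.sum_congr rfl fun e _ => ?_
  rw [Nat.cast_mul, map_mul, χ₄_nat_three_mod_four (n := 3) rfl, neg_one_mul]

lemma χ₄DivisorSumThreeDvd_trichotomy (n : ℕ) :
    χ₄DivisorSumThreeDvd n = 0 ∨ χ₄DivisorSumThreeDvd n = χ₄DivisorSum n ∨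
      χ₄DivisorSumThreeDvd n = -χ₄DivisorSum n := by
  by_cases h3 : 3 ∣ n
  · by_cases h9 : 9 ∣ n
    · obtain ⟨k, rfl⟩ := h9
      rw [χ₄DivisorSumThreeDvd_nine_mul, χ₄DivisorSum_nine_mul]
      tauto
    · exact Or.inl (χ₄DivisorSumThreeDvd_eq_zero h3 h9)
  · rw [χ₄DivisorSumThreeDvd_of_not_three_dvd h3]
    split_ifs <;> simp

lemma xi_two_mul_sub {N d : ℕ} (hd : Odd d) :
    xi (2 * N - d) = (if Even N then 1 else -1) * (χ₄ d - 3 * if 3 ∣ d + N then χ₄ d else 0) := by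
  have hd' : Odd (d : ℤ) := hd.natCast
  have hodd : Odd (2 * (N : ℤ) - d) := by rw [Int.odd_iff] at hd' ⊢; omega
  have h3 : (3 : ℤ) ∣ 2 * N - d ↔ 3 ∣ d + N := by omega
  rw [xi_eq_of_odd hodd, χ₄_two_mul_sub_of_odd _ hd', Int.cast_natCast]
  simp only [h3, Int.even_coe_nat]
  split_ifs <;> ring

lemma a6_eq (n : ℕ) :
    a6 n = (if Even n then 1 else -1) * (χ₄DivisorSum n - 3 * χ₄DivisorSumThreeDvd n) := by
  have hterm : ∀ d ∈ n.divisors.filter Odd, xi (2 * ((n : ℤ) / (d : ℤ)) - (d : ℤ)) =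
      (if Even n then 1 else -1) * (χ₄ d - 3 * if 3 ∣ d + n / d then χ₄ d else 0) := by
    intro d hd
    obtain ⟨hd, hodd⟩ := Finset.mem_filter.1 hd
    obtain ⟨N, hN⟩ := Nat.dvd_of_mem_divisors hd
    have hEven : Even (n / d) ↔ Even n := by
      rw [hN, Nat.mul_div_cancel_left _ hodd.pos, Nat.even_mul]
      simp [Nat.not_even_iff_odd.2 hodd]
    rw [← Int.natCast_div, xi_two_mul_sub hodd]
    simp only [hEven]
  rw [a6, Finset.sum_congr rfl hterm, Finset.sum_filter_of_ne, ← Finset.mul_sum,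
    Finset.sum_sub_distrib, ← Finset.mul_sum, ← Finset.sum_filter, χ₄DivisorSum_apply,
    χ₄DivisorSumThreeDvd]
  intro d _ hne
  by_contra hodd
  have hχ : χ₄ d = 0 := by
    rw [χ₄_nat_eq_if_mod_four, if_pos (Nat.even_iff.1 (Nat.not_odd_iff_even.1 hodd))]
  simp [hχ] at hne

lemma Nat.exists_sq_add_sq_iff_int (n : ℕ) :
    (∃ x y : ℤ, x ^ 2 + y ^ 2 = n) ↔ ∃ x y : ℕ, n = x ^ 2 + y ^ 2 := by
  constructor
  · rintro ⟨x, y, h⟩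
    refine ⟨x.natAbs, y.natAbs, ?_⟩
    zify
    simpa [sq_abs] using h.symm
  · rintro ⟨x, y, rfl⟩
    exact ⟨x, y, by push_cast; rfl⟩

theorem a6_eq_zero_iff_not_sum_two_squares (n : ℕ) (hn : 1 ≤ n) :
    a6 n = 0 ↔ ¬ ∃ x y : ℤ, x ^ 2 + y ^ 2 = (n : ℤ) := by
  have hsign : (if Even n then 1 else -1 : ℤ) ≠ 0 := by split_ifs <;> norm_num
  rw [a6_eq, mul_eq_zero, or_iff_right hsign, Nat.exists_sq_add_sq_iff_int,
    ← χ₄DivisorSum_ne_zero_iff (Nat.one_le_iff_ne_zero.1 hn), not_not]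
  rcases χ₄DivisorSumThreeDvd_trichotomy n with h | h | h <;> rw [h] <;> omega
end
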